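/- Let l ≡ 1 (mod 4) be an integer and q a positive integer. Write τ(χ, q) = Σ_{j mod N} χ(j)e(jq/N) for a character χ mod N. For the Kronecker symbol χ^{(4l)} = (4l|·) viewed modulo 4l, one has: τ(χ^{(4l)}, q) = 0 if q is odd; τ(χ^{(4l)}, q) = -2τ(χ_l, q) if q ≡ 2 (mod 4); and τ(χ^{(4l)}, q) = 2τ(χ_l, q) if q ≡ 0 (mod 4), where χ_l is the Jacobi symbol character mod l. -/

import Mathlib

/-- The Kronecker symbol `(m | n)` for `n : ℕ`: multiplicative in `n`, with
`(m | 2) = χ₈(m)` and `(m | odd part)` the Jacobi symbol; `(m | 0) = 1` iff `m = ±1`. -/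
noncomputable def kronSym (m : ℤ) (n : ℕ) : ℤ :=
  if n = 0 then (if m = 1 ∨ m = -1 then 1 else 0)
  else (ZMod.χ₈ (m : ZMod 8)) ^ (n.factorization 2) * jacobiSym m (n / 2 ^ (n.factorization 2))

/-!
For odd `j` the Kronecker symbol `(4l | j)` is the Jacobi symbol
`(4l | j) = (4 | j)(l | j) = (l | j)`, which equals `(j | l)` by quadratic reciprocity since
`l ≡ 1 (mod 4)`; for even `j` it vanishes. By the Chinese remainder theorem every residue mod `4l`
is `l a + 4 b` with `a` mod 4 and `b` mod `l`; then `(4l | la + 4b)` is `(b | l)` or `0` as `a` is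
odd or even, while `e((la + 4b)q/4l) = i^{aq} e(bq/l)`. So the Gauss sum factors as
`(i^q + i^{3q}) τ(χ_l, q) = i^q (1 + (-1)^q) τ(χ_l, q)`.
-/

open Finset Complex Real

theorem Nat.eq_of_mul_add_mul_modEq {m n a a' b b' : ℕ} (hmn : m.Coprime n) (ha : a < m)
    (ha' : a' < m) (h : n * a + m * b ≡ n * a' + m * b' [MOD m * n]) : a = a' := by
  have h' : n * a ≡ n * a' [MOD m] := by
    simpa [Nat.ModEq, Nat.add_mul_mod_self_left] using h.of_mul_right n
  exact (h'.cancel_left_of_coprime hmn).eq_of_lt_of_lt ha ha'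

theorem Finset.sum_range_mul_eq_sum_sum_of_coprime {M : Type*} [AddCommMonoid M] {m n : ℕ}
    (hmn : m.Coprime n) {f : ℕ → M} (hf : Function.Periodic f (m * n)) :
    ∑ j ∈ range (m * n), f j = ∑ a ∈ range m, ∑ b ∈ range n, f (n * a + m * b) := by
  set g : ℕ × ℕ → ℕ := fun x => (n * x.1 + m * x.2) % (m * n)
  have hinj : Set.InjOn g ↑(range m ×ˢ range n) := by
    rintro ⟨a, b⟩ hab ⟨a', b'⟩ hab' h
    simp only [coe_product, coe_range, Set.mem_prod, Set.mem_Iio] at hab hab'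
    simp only [g] at h
    have hb : b = b' := Nat.eq_of_mul_add_mul_modEq hmn.symm hab.2 hab'.2
      (by simpa only [Nat.ModEq, add_comm, mul_comm m n] using h)
    exact Prod.ext (Nat.eq_of_mul_add_mul_modEq hmn hab.1 hab'.1 h) hb
  have himage : (range m ×ˢ range n).image g = range (m * n) := by
    refine eq_of_subset_of_card_le (fun j hj => ?_) ?_
    · obtain ⟨⟨a, b⟩, hab, rfl⟩ := mem_image.mp hj
      simp only [mem_product, mem_range] at hab
      exact mem_range.mpr (Nat.mod_lt _ (Nat.mul_pos (by omega) (by omega)))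
    · rw [card_image_of_injOn hinj, card_product, card_range, card_range, card_range]
  rw [← himage, sum_image hinj, sum_product]
  simp only [g, hf.map_mod_nat]

theorem jacobiSym_four_mul (a : ℤ) {b : ℕ} (hb : Odd b) :
    jacobiSym (4 * a) b = jacobiSym a b := by
  have h2b : Int.gcd 2 b = 1 := by simpa [Int.gcd] using Nat.coprime_two_left.mpr hb
  rw [jacobiSym.mul_left, show (4 : ℤ) = 2 ^ 2 by norm_num, jacobiSym.sq_one' h2b, one_mul]

theorem kronSym_of_even {m : ℤ} (hm : Even m) {j : ℕ} (hj : Even j) : kronSym m j = 0 := by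
  unfold kronSym
  split_ifs with hj0
  · obtain ⟨k, rfl⟩ := hm; omega
  · rfl
  · have h8 : ZMod.χ₈ (m : ZMod 8) = 0 := by
      obtain ⟨k, rfl⟩ := hm
      rw [show ((k + k : ℤ) : ZMod 8) = 2 * k by push_cast; ring, map_mul,
        show ZMod.χ₈ 2 = 0 by decide, zero_mul]
    have h2 : 0 < j.factorization 2 :=
      Nat.prime_two.factorization_pos_of_dvd hj0 (even_iff_two_dvd.mp hj)
    rw [h8, zero_pow h2.ne', zero_mul]

theorem kronSym_of_odd (m : ℤ) {j : ℕ} (hj : Odd j) : kronSym m j = jacobiSym m j := by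
  have hj0 : j ≠ 0 := by rintro rfl; simp at hj
  have h2 : j.factorization 2 = 0 :=
    Nat.factorization_eq_zero_of_not_dvd (by simpa [← even_iff_two_dvd] using hj)
  rw [kronSym, if_neg hj0, h2]
  simp

theorem kronSym_four_mul_of_odd {l : ℕ} (hl : l % 4 = 1) {j : ℕ} (hj : Odd j) :
    kronSym (4 * l) j = jacobiSym j l := by
  rw [kronSym_of_odd _ hj, jacobiSym_four_mul _ hj]
  exact_mod_cast jacobiSym.quadratic_reciprocity_one_mod_four hl hj

theorem kronSym_four_mul_periodic {l : ℕ} (hl : l % 4 = 1) :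
    Function.Periodic (fun j : ℕ => kronSym (4 * l) j) (4 * l) := by
  intro j
  have h4l : Even (4 * l) := ⟨2 * l, by ring⟩
  have h4l' : Even (4 * (l : ℤ)) := ⟨2 * l, by ring⟩
  rcases Nat.even_or_odd j with hj | hj
  · simp only [kronSym_of_even h4l' hj, kronSym_of_even h4l' (hj.add h4l)]
  · simp only [kronSym_four_mul_of_odd hl hj, kronSym_four_mul_of_odd hl (hj.add_even h4l)]
    exact jacobiSym.mod_left' (by push_cast; rw [mul_comm, Int.add_mul_emod_self_left])

theorem exp_two_pi_I_mul_div_periodic (q N : ℕ) (hN : N ≠ 0) :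
    Function.Periodic (fun j : ℕ => exp (2 * π * I * j * q / N)) N := by
  intro j
  have hN' : (N : ℂ) ≠ 0 := Nat.cast_ne_zero.mpr hN
  simp only
  rw [← mul_one (exp (2 * π * I * j * q / N)), ← exp_nat_mul_two_pi_mul_I q,
    ← Complex.exp_add]
  congr 1
  push_cast
  field_simp

theorem kronSym_four_mul_mul_add {l : ℕ} (hl : l % 4 = 1) (a b : ℕ) :
    kronSym (4 * l) (l * a + 4 * b) = if Even a then 0 else jacobiSym b l := by
  have hlo : Odd l := Nat.odd_iff.mpr (by omega)
  split_ifs with ha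
  · exact kronSym_of_even ⟨2 * l, by ring⟩ ((ha.mul_left l).add ⟨2 * b, by ring⟩)
  · have hodd : Odd (l * a + 4 * b) :=
      (hlo.mul (Nat.not_even_iff_odd.mp ha)).add_even ⟨2 * b, by ring⟩
    rw [kronSym_four_mul_of_odd hl hodd, ← jacobiSym_four_mul (b : ℤ) hlo]
    exact jacobiSym.mod_left' (by push_cast; rw [add_comm, Int.add_mul_emod_self_left])

theorem exp_two_pi_I_mul_div_four_mul {l : ℕ} (hl : l ≠ 0) (q a b : ℕ) :
    exp (2 * π * I * ((l * a + 4 * b : ℕ) : ℂ) * q / ((4 * l : ℕ) : ℂ)) =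
      I ^ (a * q) * exp (2 * π * I * b * q / l) := by
  have hl' : (l : ℂ) ≠ 0 := Nat.cast_ne_zero.mpr hl
  rw [show I ^ (a * q) = exp ((a * q : ℕ) * (π / 2 * I)) by
    rw [Complex.exp_nat_mul, exp_pi_div_two_mul_I], ← Complex.exp_add]
  congr 1
  push_cast
  field_simp
  ring

theorem sum_range_four_ite_even_I_pow (q : ℕ) :
    ∑ a ∈ range 4, (if Even a then 0 else I ^ (a * q)) = I ^ q * (1 + (-1) ^ q) := by
  simp only [pow_mul, sum_range_succ, range_one, sum_singleton, Even.zero, ↓reduceIte,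
    Nat.not_even_one, pow_one, zero_add, even_two, add_zero, show ¬Even 3 by decide, I_pow_three,
    mul_add, mul_one, add_right_inj]
  ring

theorem sum_kronSym_four_mul_mul_exp {l : ℕ} (hl : l % 4 = 1) (q : ℕ) :
    ∑ j ∈ range (4 * l), (kronSym (4 * (l : ℤ)) j : ℂ) *
        exp (2 * π * I * j * q / ((4 * l : ℕ) : ℂ)) =
      I ^ q * (1 + (-1) ^ q) *
        ∑ j ∈ range l, (jacobiSym j l : ℂ) * exp (2 * π * I * j * q / l) := by
  have hcop : Nat.Coprime 4 l :=
    Nat.Coprime.pow_left 2 (Nat.coprime_two_left.mpr (Nat.odd_iff.mpr (by omega)))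
  have hper : Function.Periodic (fun j : ℕ => (kronSym (4 * (l : ℤ)) j : ℂ) *
      exp (2 * π * I * j * q / ((4 * l : ℕ) : ℂ))) (4 * l) :=
    ((kronSym_four_mul_periodic hl).comp (fun k : ℤ => (k : ℂ))).mul
      (exp_two_pi_I_mul_div_periodic q (4 * l) (by omega))
  rw [sum_range_mul_eq_sum_sum_of_coprime hcop hper, ← sum_range_four_ite_even_I_pow,
    sum_mul_sum]
  refine sum_congr rfl fun a _ => sum_congr rfl fun b _ => ?_
  rw [kronSym_four_mul_mul_add hl, exp_two_pi_I_mul_div_four_mul (by omega)]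
  split_ifs <;> push_cast <;> ring

theorem stmt3_general (l : ℕ) (hl : l % 4 = 1) (q : ℕ)
    (τ4 τl : ℂ)
    (hτ4 : τ4 = ∑ j ∈ Finset.range (4 * l), (kronSym (4 * (l : ℤ)) j : ℂ) *
      Complex.exp (2 * Real.pi * Complex.I * (j : ℂ) * (q : ℂ) / ((4 * l : ℕ) : ℂ)))
    (hτl : τl = ∑ j ∈ Finset.range l, (jacobiSym (j : ℤ) l : ℂ) *
      Complex.exp (2 * Real.pi * Complex.I * (j : ℂ) * (q : ℂ) / (l : ℂ))) :
    (Odd q → τ4 = 0) ∧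
    (q % 4 = 2 → τ4 = -2 * τl) ∧
    (q % 4 = 0 → τ4 = 2 * τl) := by
  rw [hτ4, sum_kronSym_four_mul_mul_exp hl, ← hτl]
  refine ⟨fun hq => by rw [hq.neg_one_pow]; ring, fun hq => ?_, fun hq => ?_⟩
  · obtain ⟨k, rfl⟩ : ∃ k, q = 4 * k + 2 := ⟨q / 4, by omega⟩
    norm_num [pow_add, pow_mul, I_pow_four]
  · obtain ⟨k, rfl⟩ : ∃ k, q = 4 * k := ⟨q / 4, by omega⟩
    norm_num [pow_mul, I_pow_four]

/-- for `l ≡ 1 (mod 4)` and `q > 0`, the Gauss sum of the Kronecker symbol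
`χ^{(4l)}` modulo `4l` vanishes for odd `q` and equals `∓2 τ(χ_l, q)` according to
`q ≡ 2, 0 (mod 4)`. -/
theorem stmt3 (l : ℕ) (hl : l % 4 = 1) (q : ℕ) (hq : 0 < q)
    (τ4 τl : ℂ)
    (hτ4 : τ4 = ∑ j ∈ Finset.range (4 * l), (kronSym (4 * (l : ℤ)) j : ℂ) *
      Complex.exp (2 * Real.pi * Complex.I * (j : ℂ) * (q : ℂ) / ((4 * l : ℕ) : ℂ)))
    (hτl : τl = ∑ j ∈ Finset.range l, (jacobiSym (j : ℤ) l : ℂ) *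
      Complex.exp (2 * Real.pi * Complex.I * (j : ℂ) * (q : ℂ) / (l : ℂ))) :
    (Odd q → τ4 = 0) ∧
    (q % 4 = 2 → τ4 = -2 * τl) ∧
    (q % 4 = 0 → τ4 = 2 * τl) :=
  stmt3_general l hl q τ4 τl hτ4 hτl
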